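/- Let K_t ⊂ ℝ be a bounded interval of length h_t > 0, let K_x ⊂ ℝ^d be a bounded measurable set with 0 < |K_x| < ∞, set K = K_t × K_x, and let v ∈ L²(K). Define m(t) := ⟨v(t,·)⟩_{K_x} for t ∈ K_t. Then: (i) the Pythagorean identity ‖v − ⟨v⟩_K‖²_{L²(K)} = ∫_{K_t} ‖v(t,·) − m(t)‖²_{L²(K_x)} dt + |K_x| ∫_{K_t} |m(t) − ⟨v⟩_K|² dt holds; (ii) |K_x| ∫_{K_t} |m(t) − ⟨v⟩_K|² dt ≤ h_t ∫_{K_t} ∫_{K_t} ‖v(t,·) − v(s,·)‖²_{L²(K_x)} |t−s|^{-2} ds dt. -/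

import Mathlib

/-! For a finite measure, `∫ (f - c)² = ∫ (f - ⨍ f)² + |μ| (⨍ f - c)²`. Applied to each slice
`v(t, ·)` with `c = ⟨v⟩_K = ⨍ m` and integrated in `t`, this is the identity (i).
With `c = 0` it is Jensen's inequality `|μ| (⨍ f)² ≤ ∫ f²`: in time it bounds
`h_t (m(t) - ⨍ m)²` by `∫ (m(t) - m(s))² ds`, in space it bounds `|K_x| (m(t) - m(s))²` by
`‖v(t,·) - v(s,·)‖²`, and `|t - s| ≤ h_t` on `K_t` inserts the weight `|t - s|⁻²` at the cost
of a second factor `h_t`. -/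

open MeasureTheory Set

/-- The measure on the time-space cylinder `K = K_t × K_x`. -/
noncomputable def cylMeasure {d : ℕ} (Kt : Set ℝ) (Kx : Set (Fin d → ℝ)) :
    Measure (ℝ × (Fin d → ℝ)) :=
  (volume.restrict Kt).prod (volume.restrict Kx)

/-- The spatial mean `m(t) = ⟨v(t,·)⟩_{K_x}` of `v(t,·)` over `K_x`. -/
noncomputable def spatialMean {d : ℕ} (Kx : Set (Fin d → ℝ))
    (v : ℝ → (Fin d → ℝ) → ℝ) (t : ℝ) : ℝ :=
  (volume Kx).toReal⁻¹ * ∫ x in Kx, v t x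

/-- The mean `⟨v⟩_K` of `v` over the cylinder `K = K_t × K_x`. -/
noncomputable def cylMean {d : ℕ} (Kt : Set ℝ) (Kx : Set (Fin d → ℝ))
    (v : ℝ → (Fin d → ℝ) → ℝ) : ℝ :=
  ((cylMeasure Kt Kx) univ).toReal⁻¹ * ∫ p, v p.1 p.2 ∂(cylMeasure Kt Kx)

section Variance

variable {α : Type*} {mα : MeasurableSpace α} {μ : Measure α} [IsFiniteMeasure μ]
  {f g : α → ℝ}

theorem integral_sub_const_sq_eq (hf : MemLp f 2 μ) (c : ℝ) :
    ∫ x, (f x - c) ^ 2 ∂μ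
      = ∫ x, (f x - ⨍ y, f y ∂μ) ^ 2 ∂μ + μ.real univ * (⨍ y, f y ∂μ - c) ^ 2 := by
  set m := ⨍ y, f y ∂μ
  have hdev_sq : Integrable (fun x => (f x - m) ^ 2) μ := (hf.sub (memLp_const m)).integrable_sq
  have hcross : Integrable (fun x => 2 * (m - c) * (f x - m)) μ :=
    ((hf.integrable one_le_two).sub (integrable_const m)).const_mul _
  have hcross_zero : ∫ x, 2 * (m - c) * (f x - m) ∂μ = 0 := by
    rw [integral_const_mul, integral_sub_average, mul_zero]
  have hsum : Integrable (fun x => (f x - m) ^ 2 + 2 * (m - c) * (f x - m)) μ :=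
    hdev_sq.add hcross
  calc ∫ x, (f x - c) ^ 2 ∂μ
      = ∫ x, ((f x - m) ^ 2 + 2 * (m - c) * (f x - m) + (m - c) ^ 2) ∂μ := by
        congr 1; ext x; ring
    _ = ∫ x, (f x - m) ^ 2 ∂μ + μ.real univ * (m - c) ^ 2 := by
        rw [integral_add hsum (integrable_const _), integral_add hdev_sq hcross,
          hcross_zero, integral_const, smul_eq_mul, add_zero]

theorem measureReal_mul_sq_average_le_integral_sq (hf : MemLp f 2 μ) :
    μ.real univ * (⨍ x, f x ∂μ) ^ 2 ≤ ∫ x, f x ^ 2 ∂μ := by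
  have h := integral_sub_const_sq_eq hf 0
  simp only [sub_zero] at h
  rw [h]
  exact le_add_of_nonneg_left (integral_nonneg fun x => sq_nonneg _)

theorem sq_average_le_average_sq (hf : MemLp f 2 μ) :
    (⨍ x, f x ∂μ) ^ 2 ≤ ⨍ x, f x ^ 2 ∂μ := by
  rcases (measureReal_nonneg (μ := μ) (s := univ)).eq_or_lt with h0 | hpos
  · simp [average_eq, ← h0]
  · rw [average_eq μ (fun x => f x ^ 2), smul_eq_mul, le_inv_mul_iff₀ hpos]
    exact measureReal_mul_sq_average_le_integral_sq hf

theorem ofReal_mul_sq_average_sub_average_le_lintegral (hf : MemLp f 2 μ) (hg : MemLp g 2 μ) :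
    ENNReal.ofReal (μ.real univ * (⨍ x, f x ∂μ - ⨍ x, g x ∂μ) ^ 2)
      ≤ ∫⁻ x, ENNReal.ofReal ((f x - g x) ^ 2) ∂μ := by
  have hfg : MemLp (fun x => f x - g x) 2 μ := hf.sub hg
  have hsub : ⨍ x, f x ∂μ - ⨍ x, g x ∂μ = ⨍ x, (f x - g x) ∂μ := by
    simp only [average_eq, smul_eq_mul,
      integral_sub (hf.integrable one_le_two) (hg.integrable one_le_two), mul_sub]
  rw [hsub, ← ofReal_integral_eq_lintegral_ofReal hfg.integrable_sq
    (ae_of_all _ fun x => sq_nonneg _)]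
  exact ENNReal.ofReal_le_ofReal (measureReal_mul_sq_average_le_integral_sq hfg)

theorem ofReal_mul_integral_sub_average_sq_le_lintegral (hf : MemLp f 2 μ) :
    ENNReal.ofReal (μ.real univ * ∫ t, (f t - ⨍ s, f s ∂μ) ^ 2 ∂μ)
      ≤ ∫⁻ t, ∫⁻ s, ENNReal.ofReal ((f t - f s) ^ 2) ∂μ ∂μ := by
  rcases eq_zero_or_neZero μ with rfl | hμ
  · simp
  have hdev_sq : Integrable (fun t => (f t - ⨍ s, f s ∂μ) ^ 2) μ :=
    (hf.sub (memLp_const _)).integrable_sq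
  rw [← integral_const_mul, ofReal_integral_eq_lintegral_ofReal (hdev_sq.const_mul _)
    (ae_of_all _ fun t => by positivity)]
  refine lintegral_mono fun t => ?_
  simpa only [average_const] using
    ofReal_mul_sq_average_sub_average_le_lintegral (memLp_const (f t)) hf

end Variance

section Product

variable {α β : Type*} {mα : MeasurableSpace α} {mβ : MeasurableSpace β}
  {μ : Measure α} {ν : Measure β} [IsFiniteMeasure ν] {v : α → β → ℝ}

theorem MeasureTheory.MemLp.ae_memLp_prodMk_left [SFinite μ]
    (hv : MemLp (fun p : α × β => v p.1 p.2) 2 (μ.prod ν)) :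
    ∀ᵐ a ∂μ, MemLp (fun b => v a b) 2 ν := by
  filter_upwards [hv.1.prodMk_left, hv.integrable_sq.prod_right_ae] with a hmeas hsq
  exact (memLp_two_iff_integrable_sq hmeas).2 hsq

theorem MeasureTheory.MemLp.average_prod_left [SFinite μ]
    (hv : MemLp (fun p : α × β => v p.1 p.2) 2 (μ.prod ν)) :
    MemLp (fun a => ⨍ b, v a b ∂ν) 2 μ := by
  have hmeas : AEStronglyMeasurable (fun a => ⨍ b, v a b ∂ν) μ := by
    simp only [average_eq, smul_eq_mul]
    exact hv.1.integral_prod_right'.const_mul _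
  have hbound : Integrable (fun a => ⨍ b, v a b ^ 2 ∂ν) μ := by
    simp only [average_eq, smul_eq_mul]
    exact hv.integrable_sq.integral_prod_left.const_mul _
  refine (memLp_two_iff_integrable_sq hmeas).2 (hbound.mono' (hmeas.pow 2) ?_)
  filter_upwards [hv.ae_memLp_prodMk_left] with a ha
  rw [Real.norm_of_nonneg (sq_nonneg _)]
  exact sq_average_le_average_sq ha

theorem average_prod [IsFiniteMeasure μ]
    (hv : Integrable (fun p : α × β => v p.1 p.2) (μ.prod ν)) :
    ⨍ p, v p.1 p.2 ∂(μ.prod ν) = ⨍ a, ⨍ b, v a b ∂ν ∂μ := by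
  simp only [average_eq, smul_eq_mul, integral_const_mul]
  rw [integral_prod _ hv, ← univ_prod_univ, measureReal_prod_prod, mul_inv]
  ring

theorem integral_sub_const_sq_prod_eq [IsFiniteMeasure μ]
    (hv : MemLp (fun p : α × β => v p.1 p.2) 2 (μ.prod ν)) (c : ℝ) :
    ∫ p, (v p.1 p.2 - c) ^ 2 ∂(μ.prod ν)
      = ∫ a, ∫ b, (v a b - ⨍ b', v a b' ∂ν) ^ 2 ∂ν ∂μ
        + ν.real univ * ∫ a, (⨍ b, v a b ∂ν - c) ^ 2 ∂μ := by
  have hsplit : ∀ᵐ a ∂μ, ∫ b, (v a b - c) ^ 2 ∂ν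
      = ∫ b, (v a b - ⨍ b', v a b' ∂ν) ^ 2 ∂ν + ν.real univ * (⨍ b, v a b ∂ν - c) ^ 2 := by
    filter_upwards [hv.ae_memLp_prodMk_left] with a ha
    exact integral_sub_const_sq_eq ha c
  have hsq : Integrable (fun p : α × β => (v p.1 p.2 - c) ^ 2) (μ.prod ν) :=
    (hv.sub (memLp_const c)).integrable_sq
  have hmean : Integrable (fun a => ν.real univ * (⨍ b, v a b ∂ν - c) ^ 2) μ :=
    (hv.average_prod_left.sub (memLp_const c)).integrable_sq.const_mul _
  have hvar : Integrable (fun a => ∫ b, (v a b - ⨍ b', v a b' ∂ν) ^ 2 ∂ν) μ := by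
    refine (hsq.integral_prod_left.sub hmean).congr ?_
    filter_upwards [hsplit] with a ha
    simp only [Pi.sub_apply, ha, add_sub_cancel_right]
  rw [integral_prod _ hsq, integral_congr_ae hsplit, integral_add hvar hmean,
    integral_const_mul]

end Product

theorem sq_sub_le_sq_mul_sq_sub_div_sq (f : ℝ → ℝ) {t s h : ℝ} (hts : |t - s| ≤ h) :
    (f t - f s) ^ 2 ≤ h ^ 2 * ((f t - f s) ^ 2 / |t - s| ^ 2) := by
  rcases eq_or_ne t s with rfl | hne
  · simp
  have hpos : 0 < |t - s| := abs_pos.2 (sub_ne_zero.2 hne)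
  rw [mul_div_left_comm]
  refine le_mul_of_one_le_right (sq_nonneg _) ?_
  rw [one_le_div (by positivity)]
  exact pow_le_pow_left₀ hpos.le hts 2

theorem ofReal_mul_integral_average_sub_sq_le {β : Type*} {mβ : MeasurableSpace β}
    {μ : Measure ℝ} [IsFiniteMeasure μ] {ν : Measure β} [IsFiniteMeasure ν]
    {v : ℝ → β → ℝ} {h : ℝ} (hdiam : ∀ᵐ t ∂μ, ∀ᵐ s ∂μ, |t - s| ≤ h)
    (hv : MemLp (fun p : ℝ × β => v p.1 p.2) 2 (μ.prod ν)) :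
    ENNReal.ofReal
        (μ.real univ * (ν.real univ * ∫ t, (⨍ x, v t x ∂ν - ⨍ s, ⨍ x, v s x ∂ν ∂μ) ^ 2 ∂μ))
      ≤ ENNReal.ofReal (h ^ 2) *
          ∫⁻ t, ∫⁻ s, ∫⁻ x, ENNReal.ofReal ((v t x - v s x) ^ 2 / |t - s| ^ 2) ∂ν ∂μ ∂μ := by
  set m := fun t => ⨍ x, v t x ∂ν
  have hfiber := hv.ae_memLp_prodMk_left
  calc ENNReal.ofReal (μ.real univ * (ν.real univ * ∫ t, (m t - ⨍ s, m s ∂μ) ^ 2 ∂μ))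
      = ENNReal.ofReal (ν.real univ)
          * ENNReal.ofReal (μ.real univ * ∫ t, (m t - ⨍ s, m s ∂μ) ^ 2 ∂μ) := by
        rw [mul_left_comm, ENNReal.ofReal_mul measureReal_nonneg]
    _ ≤ ENNReal.ofReal (ν.real univ)
          * ∫⁻ t, ∫⁻ s, ENNReal.ofReal ((m t - m s) ^ 2) ∂μ ∂μ := by
        gcongr
        exact ofReal_mul_integral_sub_average_sq_le_lintegral hv.average_prod_left
    _ = ∫⁻ t, ∫⁻ s, ENNReal.ofReal (ν.real univ * (m t - m s) ^ 2) ∂μ ∂μ := by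
        simp only [ENNReal.ofReal_mul measureReal_nonneg,
          lintegral_const_mul' _ _ ENNReal.ofReal_ne_top]
    _ ≤ ∫⁻ t, ∫⁻ s, ∫⁻ x, ENNReal.ofReal ((v t x - v s x) ^ 2) ∂ν ∂μ ∂μ := by
        refine lintegral_mono_ae ?_
        filter_upwards [hfiber] with t ht
        refine lintegral_mono_ae ?_
        filter_upwards [hfiber] with s hs
        exact ofReal_mul_sq_average_sub_average_le_lintegral ht hs
    _ ≤ ∫⁻ t, ∫⁻ s, ∫⁻ x, ENNReal.ofReal (h ^ 2)
          * ENNReal.ofReal ((v t x - v s x) ^ 2 / |t - s| ^ 2) ∂ν ∂μ ∂μ := by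
        refine lintegral_mono_ae ?_
        filter_upwards [hdiam] with t ht
        refine lintegral_mono_ae ?_
        filter_upwards [ht] with s hts
        refine lintegral_mono fun x => ?_
        rw [← ENNReal.ofReal_mul (sq_nonneg h)]
        exact ENNReal.ofReal_le_ofReal
          (sq_sub_le_sq_mul_sq_sub_div_sq (fun τ => v τ x) hts)
    _ = _ := by simp only [lintegral_const_mul' _ _ ENNReal.ofReal_ne_top]

theorem spatialMean_eq_setAverage {d : ℕ} (Kx : Set (Fin d → ℝ))
    (v : ℝ → (Fin d → ℝ) → ℝ) (t : ℝ) : spatialMean Kx v t = ⨍ x in Kx, v t x := by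
  rw [spatialMean, setAverage_eq, smul_eq_mul, measureReal_def]

theorem cylMean_eq_average {d : ℕ} (Kt : Set ℝ) (Kx : Set (Fin d → ℝ))
    (v : ℝ → (Fin d → ℝ) → ℝ) :
    cylMean Kt Kx v = ⨍ p, v p.1 p.2 ∂cylMeasure Kt Kx := by
  rw [cylMean, average_eq, smul_eq_mul, measureReal_def]

theorem stmt_3_general {d : ℕ} (a b ht : ℝ) (hab : a < b) (hht : b - a = ht)
    (Kx : Set (Fin d → ℝ)) (hKxfin : volume Kx < ⊤)
    (v : ℝ → (Fin d → ℝ) → ℝ)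
    (hv : MemLp (fun p : ℝ × (Fin d → ℝ) => v p.1 p.2) 2 (cylMeasure (Ioo a b) Kx)) :
    ((∫ p, (v p.1 p.2 - cylMean (Ioo a b) Kx v) ^ 2 ∂(cylMeasure (Ioo a b) Kx))
        = (∫ t in Ioo a b, ∫ x in Kx, (v t x - spatialMean Kx v t) ^ 2)
          + (volume Kx).toReal *
              ∫ t in Ioo a b, (spatialMean Kx v t - cylMean (Ioo a b) Kx v) ^ 2) ∧
    ENNReal.ofReal ((volume Kx).toReal *
        ∫ t in Ioo a b, (spatialMean Kx v t - cylMean (Ioo a b) Kx v) ^ 2)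
      ≤ ENNReal.ofReal ht *
          ∫⁻ t in Ioo a b, ∫⁻ s in Ioo a b, ∫⁻ x in Kx,
            ENNReal.ofReal ((v t x - v s x) ^ 2 / |t - s| ^ 2) := by
  unfold cylMeasure at hv ⊢
  have : IsFiniteMeasure (volume.restrict Kx) := isFiniteMeasure_restrict.2 hKxfin.ne
  have hKx : (volume Kx).toReal = (volume.restrict Kx).real univ := by
    rw [measureReal_restrict_apply_univ, measureReal_def]
  have hKt : (volume.restrict (Ioo a b)).real univ = ht := by
    rw [measureReal_restrict_apply_univ, Real.volume_real_Ioo_of_le hab.le, hht]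
  have hdiam : ∀ᵐ t ∂volume.restrict (Ioo a b), ∀ᵐ s ∂volume.restrict (Ioo a b),
      |t - s| ≤ ht := by
    filter_upwards [ae_restrict_mem measurableSet_Ioo] with t ht_mem
    filter_upwards [ae_restrict_mem measurableSet_Ioo] with s hs_mem
    rw [← hht, abs_sub_le_iff]
    constructor <;> linarith [ht_mem.1, ht_mem.2, hs_mem.1, hs_mem.2]
  simp only [spatialMean_eq_setAverage, cylMean_eq_average, cylMeasure,
    average_prod (hv.integrable one_le_two), hKx]
  refine ⟨integral_sub_const_sq_prod_eq hv _, ?_⟩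
  have hpos : 0 < ht := hht ▸ sub_pos.2 hab
  have key := ofReal_mul_integral_average_sub_sq_le hdiam hv
  rw [hKt, ENNReal.ofReal_mul hpos.le, sq, ENNReal.ofReal_mul hpos.le, mul_assoc] at key
  exact (ENNReal.mul_le_mul_iff_right (ENNReal.ofReal_pos.2 hpos).ne' ENNReal.ofReal_ne_top).1 key

/-- The two steps in the proof of the parabolic Poincaré inequality
(Lemma 4.3): (i) the Pythagorean identity (4.5)
`‖v − ⟨v⟩_K‖²_{L²(K)} = ∫_{K_t} ‖v(t,·) − m(t)‖²_{L²(K_x)} dt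
  + |K_x| ∫_{K_t} |m(t) − ⟨v⟩_K|² dt` with `m(t) = ⟨v(t,·)⟩_{K_x}`, and
(ii) the Jensen-type estimate
`|K_x| ∫_{K_t} |m(t) − ⟨v⟩_K|² dt
  ≤ h_t ∫_{K_t}∫_{K_t} ‖v(t,·) − v(s,·)‖²_{L²(K_x)} |t−s|⁻² ds dt`. -/
theorem stmt_3 {d : ℕ} (a b ht : ℝ) (hab : a < b) (hht : b - a = ht)
    (Kx : Set (Fin d → ℝ)) (hKxm : MeasurableSet Kx)
    (hKx0 : 0 < volume Kx) (hKxfin : volume Kx < ⊤)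
    (v : ℝ → (Fin d → ℝ) → ℝ)
    (hv : MemLp (fun p : ℝ × (Fin d → ℝ) => v p.1 p.2) 2 (cylMeasure (Ioo a b) Kx)) :
    ((∫ p, (v p.1 p.2 - cylMean (Ioo a b) Kx v) ^ 2 ∂(cylMeasure (Ioo a b) Kx))
        = (∫ t in Ioo a b, ∫ x in Kx, (v t x - spatialMean Kx v t) ^ 2)
          + (volume Kx).toReal *
              ∫ t in Ioo a b, (spatialMean Kx v t - cylMean (Ioo a b) Kx v) ^ 2) ∧
    ENNReal.ofReal ((volume Kx).toReal *
        ∫ t in Ioo a b, (spatialMean Kx v t - cylMean (Ioo a b) Kx v) ^ 2)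
      ≤ ENNReal.ofReal ht *
          ∫⁻ t in Ioo a b, ∫⁻ s in Ioo a b, ∫⁻ x in Kx,
            ENNReal.ofReal ((v t x - v s x) ^ 2 / |t - s| ^ 2) :=
  stmt_3_general a b ht hab hht Kx hKxfin v hv
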